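/- Let R be a po-ring and let A be a partially ordered right R-module. Then A is po-coherent if and only if for all k, m, n ≥ 0 and all matrices M ∈ M_{k,m}(A) and N ∈ M_{k,n}(A), the solution set of the mixed system { MX + NY ≥ 0 and X ≥ 0 }, with unknowns X ∈ M_{m,1}(R) and Y ∈ M_{n,1}(R), is a finitely generated right R⁺-subsemimodule of M_{m,1}(R) × M_{n,1}(R). -/
import Mathlib


/-- A *po-ring*: a ring equipped with a partial order such that addition is
translation-invariant, multiplication by nonnegative elements (on either side) is monotone,
the ring is directed (every element is a difference of two nonnegative elements),
and `0 ≤ 1`. -/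
class PORing (R : Type*) extends Ring R, PartialOrder R where
  add_le_add_right' : ∀ a b : R, a ≤ b → ∀ c : R, a + c ≤ b + c
  mul_le_mul_of_nonneg_right' : ∀ a b c : R, a ≤ b → 0 ≤ c → a * c ≤ b * c
  mul_le_mul_of_nonneg_left' : ∀ a b c : R, a ≤ b → 0 ≤ c → c * a ≤ c * b
  directed' : ∀ x : R, ∃ y z : R, 0 ≤ y ∧ 0 ≤ z ∧ x = y - z
  zero_le_one' : (0 : R) ≤ 1

/-- A *partially ordered right module* over a po-ring `R`: an additive abelian group with a
right `R`-action `rsmul` (written on the right, so `rsmul a ξ` is `aξ`), with the usual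
right-module axioms, such that addition is translation-invariant and
`0 ≤ a`, `0 ≤ ξ` imply `0 ≤ aξ`. -/
class PORightModule (R : Type*) [PORing R] (A : Type*) [AddCommGroup A] [PartialOrder A] where
  rsmul : A → R → A
  add_rsmul : ∀ (a b : A) (r : R), rsmul (a + b) r = rsmul a r + rsmul b r
  rsmul_add : ∀ (a : A) (r s : R), rsmul a (r + s) = rsmul a r + rsmul a s
  rsmul_mul : ∀ (a : A) (r s : R), rsmul a (r * s) = rsmul (rsmul a r) s
  rsmul_one : ∀ a : A, rsmul a 1 = a
  add_le_add_right' : ∀ a b : A, a ≤ b → ∀ c : A, a + c ≤ b + c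
  rsmul_nonneg : ∀ (a : A) (r : R), 0 ≤ a → 0 ≤ r → 0 ≤ rsmul a r

open PORightModule

/-- A po-ring is a partially ordered right module over itself. -/
instance PORing.toPORightModule (R : Type*) [PORing R] : PORightModule R R where
  rsmul := (· * ·)
  add_rsmul := add_mul
  rsmul_add := mul_add
  rsmul_mul a r s := (mul_assoc a r s).symm
  rsmul_one := mul_one
  add_le_add_right' := PORing.add_le_add_right'
  rsmul_nonneg a r ha hr := by
    have h := PORing.mul_le_mul_of_nonneg_right' 0 a r ha hr
    simpa using h

/-- Products of partially ordered right modules, ordered coordinatewise. -/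
instance Pi.instPORightModule {R : Type*} [PORing R] {ι : Type*} {A : ι → Type*}
    [∀ i, AddCommGroup (A i)] [∀ i, PartialOrder (A i)] [∀ i, PORightModule R (A i)] :
    PORightModule R (∀ i, A i) where
  rsmul x r i := rsmul (x i) r
  add_rsmul a b r := funext fun i => add_rsmul (a i) (b i) r
  rsmul_add a r s := funext fun i => rsmul_add (a i) r s
  rsmul_mul a r s := funext fun i => rsmul_mul (a i) r s
  rsmul_one a := funext fun i => rsmul_one (a i)
  add_le_add_right' a b h c := by
    intro i
    exact PORightModule.add_le_add_right' R (a i) (b i) (h i) (c i)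
  rsmul_nonneg a r ha hr := by
    intro i
    exact PORightModule.rsmul_nonneg (a i) r (ha i) hr

/-- Binary products of partially ordered right modules, ordered coordinatewise. -/
instance Prod.instPORightModule {R : Type*} [PORing R] {A B : Type*}
    [AddCommGroup A] [PartialOrder A] [PORightModule R A]
    [AddCommGroup B] [PartialOrder B] [PORightModule R B] :
    PORightModule R (A × B) where
  rsmul x r := (rsmul x.1 r, rsmul x.2 r)
  add_rsmul a b r := by
    refine Prod.ext ?_ ?_ <;> simp [PORightModule.add_rsmul]
  rsmul_add a r s := by
    refine Prod.ext ?_ ?_ <;> simp [PORightModule.rsmul_add]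
  rsmul_mul a r s := by
    refine Prod.ext ?_ ?_ <;> simp [PORightModule.rsmul_mul]
  rsmul_one a := by
    refine Prod.ext ?_ ?_ <;> simp [PORightModule.rsmul_one]
  add_le_add_right' a b h c := by
    rw [Prod.le_def] at h ⊢
    constructor
    · simpa using PORightModule.add_le_add_right' R a.1 b.1 h.1 c.1
    · simpa using PORightModule.add_le_add_right' R a.2 b.2 h.2 c.2
  rsmul_nonneg a r ha hr := by
    rw [Prod.le_def] at ha ⊢
    constructor
    · simpa using PORightModule.rsmul_nonneg a.1 r (by simpa using ha.1) hr
    · simpa using PORightModule.rsmul_nonneg a.2 r (by simpa using ha.2) hr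

section Defs

variable (R : Type*) [PORing R]

/-- The product `UX = a₁ξ₁ + ⋯ + aₙξₙ` of a row matrix `U = (a₁,…,aₙ)` with entries in `A`
and a column matrix `X = (ξ₁,…,ξₙ)ᵗ` with entries in `R`. -/
def rowMul {A : Type*} [AddCommGroup A] [PartialOrder A] [PORightModule R A]
    {n : ℕ} (U : Fin n → A) (X : Fin n → R) : A :=
  ∑ i, rsmul (U i) (X i)

/-- A subset `S` of a partially ordered right `R`-module is a *finitely generated
`R⁺`-subsemimodule* if it is the set of all `R⁺`-linear combinations of some finite subset. -/
def IsFGConeIn {A : Type*} [AddCommGroup A] [PartialOrder A] [PORightModule R A]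
    (S : Set A) : Prop :=
  ∃ (k : ℕ) (g : Fin k → A),
    S = { a | ∃ Y : Fin k → R, (∀ i, 0 ≤ Y i) ∧ a = rowMul R g Y }

/-- `A` is *finitely related at* the row matrix `U ∈ M_{1,n}(A)` if the solution set of the
mixed system `UX ≥ 0, X ≥ 0` is a finitely generated `R⁺`-subsemimodule of `M_{n,1}(R)`. -/
def FinitelyRelatedAt {A : Type*} [AddCommGroup A] [PartialOrder A] [PORightModule R A]
    {n : ℕ} (U : Fin n → A) : Prop :=
  IsFGConeIn R {X : Fin n → R | 0 ≤ rowMul R U X ∧ ∀ i, 0 ≤ X i}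

/-- `A` is *finitely po-presented at* the row matrix `U ∈ M_{1,n}(A)` if the solution set of
the system `UX ≥ 0` is a finitely generated `R⁺`-subsemimodule of `M_{n,1}(R)`. -/
def FinitelyPoPresentedAt {A : Type*} [AddCommGroup A] [PartialOrder A] [PORightModule R A]
    {n : ℕ} (U : Fin n → A) : Prop :=
  IsFGConeIn R {X : Fin n → R | 0 ≤ rowMul R U X}

/-- A row matrix `U` is *spanning* if its entries generate `A` as a right `R`-module, i.e.
every element of `A` is an `R`-linear combination `UX` of the entries. -/
def SpanningRow {A : Type*} [AddCommGroup A] [PartialOrder A] [PORightModule R A]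
    {n : ℕ} (U : Fin n → A) : Prop :=
  ∀ a : A, ∃ X : Fin n → R, a = rowMul R U X

variable (A : Type*) [AddCommGroup A] [PartialOrder A] [PORightModule R A]

/-- `A` is *finitely po-presented* if it is finitely po-presented at some spanning row
matrix. -/
def FinitelyPoPresented : Prop :=
  ∃ (n : ℕ) (U : Fin n → A), SpanningRow R U ∧ FinitelyPoPresentedAt R U

/-- `A` is *finitely related* if it is a finitely generated right `R`-module and is finitely
related at every spanning row matrix. -/
def FinitelyRelatedMod : Prop :=
  (∃ (n : ℕ) (U : Fin n → A), SpanningRow R U) ∧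
    ∀ (n : ℕ) (U : Fin n → A), SpanningRow R U → FinitelyRelatedAt R U

/-- `A` is *po-coherent* if it is finitely related at every row matrix of elements of `A`. -/
def PoCoherent : Prop :=
  ∀ (n : ℕ) (U : Fin n → A), FinitelyRelatedAt R U

end Defs

/-- A po-ring is *right po-coherent* if it is po-coherent as a partially ordered right module
over itself. -/
def RightPoCoherent (R : Type*) [PORing R] : Prop :=
  PoCoherent R R

section Aux

variable {R : Type*} [PORing R] {A : Type*} [AddCommGroup A] [PartialOrder A]
  [PORightModule R A]

/-- `rsmul a` as an additive homomorphism `R →+ A`. -/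
def rsmulRightHom (a : A) : R →+ A :=
  AddMonoidHom.mk' (rsmul a) (rsmul_add a)

/-- `rsmul · r` as an additive homomorphism `A →+ A`. -/
def rsmulLeftHom (r : R) : A →+ A :=
  AddMonoidHom.mk' (fun a => rsmul a r) (fun a b => add_rsmul a b r)

lemma rsmul_sub (a : A) (r s : R) : rsmul a (r - s) = rsmul a r - rsmul a s :=
  map_sub (rsmulRightHom a) r s

lemma neg_rsmul (a : A) (r : R) : rsmul (-a) r = -rsmul a r :=
  map_neg (rsmulLeftHom (A := A) r) a

/-- A row over a Pi-module, evaluated at a coordinate. -/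
lemma rowMul_pi_apply {ι : Type*} {B : ι → Type*} [∀ i, AddCommGroup (B i)]
    [∀ i, PartialOrder (B i)] [∀ i, PORightModule R (B i)] {p : ℕ}
    (g : Fin p → ∀ i, B i) (Y : Fin p → R) (j : ι) :
    rowMul R g Y j = rowMul R (fun i => g i j) Y := by
  unfold rowMul
  rw [Finset.sum_apply]
  rfl

/-- Composition of row multiplications (mixed associativity). -/
lemma rowMul_rowMul {m p : ℕ} (U : Fin m → A) (g : Fin p → Fin m → R) (Y : Fin p → R) :
    rowMul R U (rowMul R g Y) = rowMul R (fun i => rowMul R U (g i)) Y := by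
  unfold rowMul
  have h1 : ∀ j : Fin m, rsmul (U j) ((∑ i, rsmul (g i) (Y i)) j)
      = ∑ i, rsmul (rsmul (U j) (g i j)) (Y i) := by
    intro j
    rw [Finset.sum_apply]
    have : (∑ i, (rsmul (g i) (Y i)) j) = ∑ i, g i j * Y i := rfl
    rw [this]
    show (rsmulRightHom (U j)) (∑ i, g i j * Y i) = _
    rw [map_sum]
    exact Finset.sum_congr rfl fun i _ => rsmul_mul (U j) (g i j) (Y i)
  calc (∑ j, rsmul (U j) ((∑ i, rsmul (g i) (Y i)) j))
      = ∑ j, ∑ i, rsmul (rsmul (U j) (g i j)) (Y i) :=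
        Finset.sum_congr rfl fun j _ => h1 j
    _ = ∑ i, ∑ j, rsmul (rsmul (U j) (g i j)) (Y i) := Finset.sum_comm
    _ = ∑ i, rsmul (∑ j, rsmul (U j) (g i j)) (Y i) := by
        refine Finset.sum_congr rfl fun i _ => ?_
        exact (map_sum (rsmulLeftHom (A := A) (Y i)) _ _).symm

/-- A map which is additive and right-`R`-linear commutes with row multiplication. -/
lemma map_rowMul {B C : Type*} [AddCommGroup B] [PartialOrder B] [PORightModule R B]
    [AddCommGroup C] [PartialOrder C] [PORightModule R C]
    (L : B → C) (hadd : ∀ x y : B, L (x + y) = L x + L y)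
    (hsm : ∀ (x : B) (r : R), L (rsmul x r) = rsmul (L x) r)
    {p : ℕ} (h : Fin p → B) (Z : Fin p → R) :
    L (rowMul R h Z) = rowMul R (fun i => L (h i)) Z := by
  unfold rowMul
  show (AddMonoidHom.mk' L hadd) (∑ i, rsmul (h i) (Z i)) = _
  rw [map_sum]
  exact Finset.sum_congr rfl fun i _ => hsm (h i) (Z i)

/-- The image of a finitely generated cone under an additive right-linear map is a
finitely generated cone. -/
lemma IsFGConeIn.image {B C : Type*} [AddCommGroup B] [PartialOrder B] [PORightModule R B]
    [AddCommGroup C] [PartialOrder C] [PORightModule R C]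
    (L : B → C) (hadd : ∀ x y : B, L (x + y) = L x + L y)
    (hsm : ∀ (x : B) (r : R), L (rsmul x r) = rsmul (L x) r)
    {S : Set B} (hS : IsFGConeIn R S) : IsFGConeIn R (L '' S) := by
  obtain ⟨k, g, hg⟩ := hS
  refine ⟨k, fun i => L (g i), ?_⟩
  ext c
  constructor
  · rintro ⟨b, hb, rfl⟩
    rw [hg] at hb
    obtain ⟨Y, hY, rfl⟩ := hb
    exact ⟨Y, hY, (map_rowMul L hadd hsm g Y).symm ▸ rfl⟩
  · rintro ⟨Y, hY, rfl⟩
    exact ⟨rowMul R g Y, hg ▸ ⟨Y, hY, rfl⟩, map_rowMul L hadd hsm g Y⟩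

/-- Splitting a row multiplication along `Fin.append`. -/
lemma rowMul_append {m n : ℕ} (P : Fin m → A) (Q : Fin n → A) (Z : Fin (m + n) → R) :
    rowMul R (Fin.append P Q) Z =
      rowMul R P (fun j => Z (Fin.castAdd n j)) + rowMul R Q (fun j => Z (Fin.natAdd m j)) := by
  unfold rowMul
  rw [Fin.sum_univ_add]
  congr 1
  · exact Finset.sum_congr rfl fun j _ => by rw [Fin.append_left]
  · exact Finset.sum_congr rfl fun j _ => by rw [Fin.append_right]

lemma rowMul_sub_arg {n : ℕ} (U : Fin n → A) (X Y : Fin n → R) :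
    rowMul R U (fun j => X j - Y j) = rowMul R U X - rowMul R U Y := by
  unfold rowMul
  rw [← Finset.sum_sub_distrib]
  exact Finset.sum_congr rfl fun j _ => rsmul_sub (U j) (X j) (Y j)

lemma rowMul_neg_left {n : ℕ} (U : Fin n → A) (X : Fin n → R) :
    rowMul R (fun j => -(U j)) X = -rowMul R U X := by
  unfold rowMul
  rw [← Finset.sum_neg_distrib]
  exact Finset.sum_congr rfl fun j _ => neg_rsmul (U j) (X j)

/-- The positive orthant together with finitely many homogeneous inequalities gives a
finitely generated cone, provided `A` is po-coherent. -/
lemma fg_orthant_system (hco : PoCoherent R A) :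
    ∀ (k m : ℕ) (M : Fin k → Fin m → A),
      IsFGConeIn R {X : Fin m → R | (∀ i, 0 ≤ rowMul R (M i) X) ∧ ∀ j, 0 ≤ X j} := by
  intro k
  induction k with
  | zero =>
    intro m M
    refine ⟨m, fun i => Pi.single i (1 : R), ?_⟩
    have hid : ∀ Y : Fin m → R, rowMul R (fun i => (Pi.single i 1 : Fin m → R)) Y = Y := by
      intro Y
      funext j
      rw [rowMul_pi_apply]
      show (∑ i, (Pi.single i (1 : R) : Fin m → R) j * Y i) = Y j
      simp [Pi.single_apply, ite_mul]
    ext X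
    simp only [Set.mem_setOf_eq]
    constructor
    · rintro ⟨-, hX⟩
      exact ⟨X, hX, (hid X).symm⟩
    · rintro ⟨Y, hY, rfl⟩
      rw [hid Y]
      exact ⟨fun i => i.elim0, hY⟩
  | succ k ih =>
    intro m M
    obtain ⟨p, g, hg⟩ := ih m (fun i : Fin k => M i.succ)
    set U := M 0 with hU
    set V : Fin p → A := fun i => rowMul R U (g i) with hV
    obtain ⟨q, h, hh⟩ := hco p V
    refine ⟨q, fun j => rowMul R g (h j), ?_⟩
    ext X
    simp only [Set.mem_setOf_eq]
    constructor
    · rintro ⟨hMX, hX⟩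
      have hX' : X ∈ {X : Fin m → R | (∀ i, 0 ≤ rowMul R ((fun i : Fin k => M i.succ) i) X) ∧
          ∀ j, 0 ≤ X j} := ⟨fun i => hMX i.succ, hX⟩
      rw [hg] at hX'
      obtain ⟨Y, hY, rfl⟩ := hX'
      have hYT : Y ∈ {Y : Fin p → R | 0 ≤ rowMul R V Y ∧ ∀ i, 0 ≤ Y i} := by
        refine ⟨?_, hY⟩
        rw [hV]
        rw [← rowMul_rowMul U g Y]
        exact hMX 0
      rw [hh] at hYT
      obtain ⟨Z, hZ, rfl⟩ := hYT
      exact ⟨Z, hZ, rowMul_rowMul g h Z⟩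
    · rintro ⟨Z, hZ, rfl⟩
      have hYT : rowMul R h Z ∈ {Y : Fin p → R | 0 ≤ rowMul R V Y ∧ ∀ i, 0 ≤ Y i} := by
        rw [hh]; exact ⟨Z, hZ, rfl⟩
      obtain ⟨hVY, hY⟩ := hYT
      have hX' : rowMul R g (rowMul R h Z) ∈
          {X : Fin m → R | (∀ i, 0 ≤ rowMul R ((fun i : Fin k => M i.succ) i) X) ∧ ∀ j, 0 ≤ X j} := by
        rw [hg]; exact ⟨rowMul R h Z, hY, rfl⟩
      obtain ⟨hsucc, hpos⟩ := hX'
      rw [← rowMul_rowMul g h Z]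
      refine ⟨?_, hpos⟩
      intro i
      refine Fin.cases ?_ (fun i => hsucc i) i
      rw [rowMul_rowMul U g (rowMul R h Z)]
      exact hVY

lemma rowMul_zero_len {n : ℕ} (hn : n = 0) (U : Fin n → A) (X : Fin n → R) :
    rowMul R U X = 0 := by
  subst hn
  simp [rowMul]

/-- The linear map `(X, Y', Y'') ↦ (X, Y' - Y'')`. -/
def mixMap {R : Type*} [PORing R] {m n : ℕ} (Z : Fin (m + (n + n)) → R) :
    (Fin m → R) × (Fin n → R) :=
  (fun j => Z (Fin.castAdd (n + n) j),
   fun j => Z (Fin.natAdd m (Fin.castAdd n j)) - Z (Fin.natAdd m (Fin.natAdd n j)))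

lemma mixMap_add {m n : ℕ} (x y : Fin (m + (n + n)) → R) :
    mixMap (x + y) = mixMap x + mixMap y := by
  refine Prod.ext ?_ ?_ <;> funext j
  · rfl
  · show _ - _ = _
    simp only [mixMap, Pi.add_apply, Prod.snd_add]
    abel

lemma mixMap_rsmul {m n : ℕ} (x : Fin (m + (n + n)) → R) (r : R) :
    mixMap (rsmul x r) = rsmul (mixMap x) r := by
  refine Prod.ext ?_ ?_
  · rfl
  · funext j
    show x (Fin.natAdd m (Fin.castAdd n j)) * r - x (Fin.natAdd m (Fin.natAdd n j)) * r
      = (x (Fin.natAdd m (Fin.castAdd n j)) - x (Fin.natAdd m (Fin.natAdd n j))) * r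
    rw [sub_mul]

lemma rowMul_mixRow {m n : ℕ} (Mi : Fin m → A) (Ni : Fin n → A)
    (Z : Fin (m + (n + n)) → R) :
    rowMul R (Fin.append Mi (Fin.append Ni (fun j => -(Ni j)))) Z =
      rowMul R Mi (mixMap Z).1 + rowMul R Ni (mixMap Z).2 := by
  rw [rowMul_append, rowMul_append, rowMul_neg_left]
  have h2 : rowMul R Ni (mixMap Z).2 =
      rowMul R Ni (fun j => Z (Fin.natAdd m (Fin.castAdd n j))) -
        rowMul R Ni (fun j => Z (Fin.natAdd m (Fin.natAdd n j))) := by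
    rw [← rowMul_sub_arg]
    rfl
  have h1 : rowMul R Mi (mixMap Z).1 = rowMul R Mi (fun j => Z (Fin.castAdd (n + n) j)) := rfl
  rw [h1, h2]
  abel

end Aux

/-- `A` is po-coherent iff for all `k, m, n ≥ 0` and all matrices
`M ∈ M_{k,m}(A)`, `N ∈ M_{k,n}(A)`, the solution set of the mixed system
`MX + NY ≥ 0`, `X ≥ 0` (unknowns `X ∈ M_{m,1}(R)`, `Y ∈ M_{n,1}(R)`) is a finitely
generated right `R⁺`-subsemimodule of `M_{m,1}(R) × M_{n,1}(R)`. -/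
theorem poCoherent_iff_mixed_systems
    (R A : Type*) [PORing R] [AddCommGroup A] [PartialOrder A] [PORightModule R A] :
    PoCoherent R A ↔
      ∀ (k m n : ℕ) (M : Fin k → Fin m → A) (N : Fin k → Fin n → A),
        IsFGConeIn R {p : (Fin m → R) × (Fin n → R) |
          (∀ i, 0 ≤ rowMul R (M i) p.1 + rowMul R (N i) p.2) ∧ ∀ j, 0 ≤ p.1 j} := by
  constructor
  · intro hco k m n M N
    have hfg := fg_orthant_system hco k (m + (n + n))
      (fun i => Fin.append (M i) (Fin.append (N i) (fun j => -(N i j))))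
    have himg := IsFGConeIn.image (mixMap (R := R) (m := m) (n := n))
      mixMap_add mixMap_rsmul hfg
    obtain ⟨kk, g, hg⟩ := himg
    refine ⟨kk, g, ?_⟩
    rw [← hg]
    ext p
    simp only [Set.mem_image, Set.mem_setOf_eq]
    constructor
    · rintro ⟨hineq, hpos⟩
      choose y z hy hz hp using fun j => PORing.directed' (p.2 j)
      refine ⟨Fin.append p.1 (Fin.append y z), ⟨?_, ?_⟩, ?_⟩
      · intro i
        rw [rowMul_mixRow]
        have hLZ : mixMap (Fin.append p.1 (Fin.append y z)) = p := by
          refine Prod.ext ?_ ?_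
          · funext j
            show Fin.append p.1 (Fin.append y z) (Fin.castAdd (n + n) j) = p.1 j
            rw [Fin.append_left]
          · funext j
            show Fin.append p.1 (Fin.append y z) (Fin.natAdd m (Fin.castAdd n j)) -
                Fin.append p.1 (Fin.append y z) (Fin.natAdd m (Fin.natAdd n j)) = p.2 j
            rw [Fin.append_right, Fin.append_right, Fin.append_left, Fin.append_right]
            exact (hp j).symm
        rw [hLZ]
        exact hineq i
      · intro j
        refine Fin.addCases (motive := fun j => 0 ≤ Fin.append p.1 (Fin.append y z) j)
          (fun j' => ?_) (fun j' => ?_) j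
        · show 0 ≤ Fin.append p.1 (Fin.append y z) (Fin.castAdd (n + n) j')
          rw [Fin.append_left]; exact hpos j'
        · show 0 ≤ Fin.append p.1 (Fin.append y z) (Fin.natAdd m j')
          rw [Fin.append_right]
          refine Fin.addCases (motive := fun j => 0 ≤ Fin.append y z j)
            (fun j'' => ?_) (fun j'' => ?_) j'
          · show 0 ≤ Fin.append y z (Fin.castAdd n j'')
            rw [Fin.append_left]; exact hy j''
          · show 0 ≤ Fin.append y z (Fin.natAdd n j'')
            rw [Fin.append_right]; exact hz j''
      · refine Prod.ext ?_ ?_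
        · funext j
          show Fin.append p.1 (Fin.append y z) (Fin.castAdd (n + n) j) = p.1 j
          rw [Fin.append_left]
        · funext j
          show Fin.append p.1 (Fin.append y z) (Fin.natAdd m (Fin.castAdd n j)) -
              Fin.append p.1 (Fin.append y z) (Fin.natAdd m (Fin.natAdd n j)) = p.2 j
          rw [Fin.append_right, Fin.append_right, Fin.append_left, Fin.append_right]
          exact (hp j).symm
    · rintro ⟨Z, ⟨hineq, hpos⟩, rfl⟩
      constructor
      · intro i
        rw [← rowMul_mixRow]
        exact hineq i
      · intro j
        exact hpos (Fin.castAdd (n + n) j)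
  · intro hyp n U
    have h := hyp 1 n 0 (fun _ => U) (fun _ => Fin.elim0)
    have himg := IsFGConeIn.image (Prod.fst (α := Fin n → R) (β := Fin 0 → R))
      (fun x y => rfl) (fun x r => rfl) h
    obtain ⟨kk, g, hg⟩ := himg
    refine ⟨kk, g, ?_⟩
    rw [← hg]
    ext X
    simp only [Set.mem_image, Set.mem_setOf_eq]
    constructor
    · rintro ⟨h1, h2⟩
      refine ⟨(X, Fin.elim0), ⟨fun i => ?_, h2⟩, rfl⟩
      rw [rowMul_zero_len rfl]
      simpa using h1
    · rintro ⟨p, ⟨h1, h2⟩, rfl⟩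
      refine ⟨?_, h2⟩
      have := h1 0
      rw [rowMul_zero_len rfl] at this
      simpa using this
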